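/- Let G be a finite commutative group with |G| = q, and let A₁, A₂ ⊆ G be standard sets. Then λ(A₁ ∩ A₂) ≤ q · λ(A₁) · λ(A₂), λ⁺(A₁ ∩ A₂) ≤ q · λ⁺(A₁) · λ⁺(A₂), λ⁻(A₁ ∩ A₂) ≤ q · λ⁻(A₁) · λ⁺(A₂), and λ±(A₁ ∩ A₂) ≤ q · λ±(A₁) · λ⁺(A₂). -/

import Mathlib

open scoped Pointwise ComplexOrder

noncomputable section

def IsStandard {G : Type*} [AddCommGroup G] (A : Set G) : Prop :=
  A = -A ∧ (0 : G) ∈ A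

def Delta {G : Type*} [AddCommGroup G] (A : Set G) : ℕ :=
  sSup {n | ∃ B : Finset G, ((B : Set G) - (B : Set G)) ∩ A = {0} ∧ B.card = n}

def DeltaBar {G : Type*} [AddCommGroup G] (A : Set G) : ℕ :=
  sSup {n | ∃ B : Finset G, ((B : Set G) - (B : Set G)) ⊆ A ∧ B.card = n}

def deltaL {G : Type*} [AddCommGroup G] [Fintype G] (A : Set G) : ℝ :=
  (Delta A : ℝ) / (Fintype.card G : ℝ)

def deltaU {G : Type*} [AddCommGroup G] (A : Set G) : ℝ :=
  1 / (DeltaBar A : ℝ)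

def ftrans {G : Type*} [AddCommGroup G] [Fintype G] (f : G → ℝ) (γ : AddChar G Circle) : ℂ :=
  ∑ x, (γ x : ℂ) * (f x : ℂ)

def PosFT {G : Type*} [AddCommGroup G] [Fintype G] (f : G → ℝ) : Prop :=
  ∀ γ : AddChar G Circle, 0 ≤ ftrans f γ

def lamSet {G : Type*} [AddCommGroup G] [Fintype G] (S : Set (G → ℝ)) : Set ℝ :=
  {r | ∃ f ∈ S, PosFT f ∧ (∑ x, f x) ≠ 0 ∧ r = f 0 / ∑ x, f x}

def lam {G : Type*} [AddCommGroup G] [Fintype G] (A : Set G) : ℝ :=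
  sInf (lamSet {f | f ≠ 0 ∧ ∀ x ∉ A, f x = 0})

def lamMinus {G : Type*} [AddCommGroup G] [Fintype G] (A : Set G) : ℝ :=
  sInf (lamSet {f | f ≠ 0 ∧ ∀ x ∉ A, f x ≤ 0})

def lamPlus {G : Type*} [AddCommGroup G] [Fintype G] (A : Set G) : ℝ :=
  sInf (lamSet {f | f ≠ 0 ∧ (∀ x ∉ A, f x = 0) ∧ ∀ x ∈ A, 0 ≤ f x})

def lamPM {G : Type*} [AddCommGroup G] [Fintype G] (A : Set G) : ℝ :=
  sInf (lamSet {f | f ≠ 0 ∧ (∀ x ∉ A, f x ≤ 0) ∧ ∀ x ∈ A, 0 ≤ f x})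

/-! Up to the factor `q`, the Fourier transform of a pointwise product is the convolution of the
Fourier transforms, so a product of two functions with `f̂ ≥ 0` again has `f̂ ≥ 0`, and keeping
only the principal-character term of that convolution gives `f̂₁(𝟙) f̂₂(𝟙) ≤ q · (f₁ f₂)^(𝟙)`.
Hence if `f₁`, `f₂` are admissible for `A₁`, `A₂` then `f₁ f₂` is admissible for `A₁ ∩ A₂`
(a nonnegative second factor preserves the sign conditions), with ratio at most `q` times the
product of theirs. The point mass at `0` is admissible everywhere, so no infimum is over an empty
set. -/

section FourierPositivity

variable {G : Type*} [AddCommGroup G] [Fintype G]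

instance : Fintype (AddChar G Circle) :=
  Fintype.ofEquiv _ AddChar.circleEquivComplex.toEquiv.symm

lemma sum_circleChar_apply [DecidableEq G] (x : G) :
    ∑ γ : AddChar G Circle, (γ x : ℂ) = if x = 0 then (Fintype.card G : ℂ) else 0 := by
  rw [← AddChar.sum_apply_eq_ite]
  exact Fintype.sum_equiv AddChar.circleEquivComplex.toEquiv _ _ fun _ => rfl

lemma ftrans_zero (f : G → ℝ) : ftrans f 0 = ((∑ x, f x : ℝ) : ℂ) := by
  simp [ftrans]

lemma sum_ftrans (f : G → ℝ) :
    ∑ γ : AddChar G Circle, ftrans f γ = (Fintype.card G : ℂ) * (f 0 : ℂ) := by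
  classical
  simp only [ftrans]
  rw [Finset.sum_comm]
  simp_rw [← Finset.sum_mul, sum_circleChar_apply]
  simp

lemma card_mul_ftrans_mul (f₁ f₂ : G → ℝ) (γ : AddChar G Circle) :
    (Fintype.card G : ℂ) * ftrans (f₁ * f₂) γ =
      ∑ δ : AddChar G Circle, ftrans f₁ δ * ftrans f₂ (γ - δ) := by
  classical
  have hchar : ∀ (δ : AddChar G Circle) (x y : G),
      ((γ - δ) x : ℂ) * (δ y : ℂ) = (γ x : ℂ) * (δ (y - x) : ℂ) := by
    intro δ x y
    rw [AddChar.sub_apply, sub_eq_add_neg y, AddChar.map_add_eq_mul]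
    push_cast
    ring
  symm
  calc ∑ δ : AddChar G Circle, ftrans f₁ δ * ftrans f₂ (γ - δ)
      = ∑ x, ∑ y, (γ x : ℂ) * (f₁ y * f₂ x : ℝ) * ∑ δ : AddChar G Circle, (δ (y - x) : ℂ) := by
        simp only [ftrans, Finset.sum_mul, Finset.mul_sum]
        rw [Finset.sum_comm]
        refine Finset.sum_congr rfl fun x _ => ?_
        rw [Finset.sum_comm]
        refine Finset.sum_congr rfl fun y _ => Finset.sum_congr rfl fun δ _ => ?_
        push_cast
        linear_combination ((f₁ y : ℂ) * f₂ x) * hchar δ x y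
    _ = (Fintype.card G : ℂ) * ftrans (f₁ * f₂) γ := by
        rw [ftrans, Finset.mul_sum]
        refine Finset.sum_congr rfl fun x _ => ?_
        simp only [sum_circleChar_apply, sub_eq_zero, mul_ite, mul_zero, Finset.sum_ite_eq',
          Finset.mem_univ, if_true]
        push_cast [Pi.mul_apply]
        ring

lemma PosFT.mul {f₁ f₂ : G → ℝ} (h₁ : PosFT f₁) (h₂ : PosFT f₂) : PosFT (f₁ * f₂) := by
  intro γ
  have hq : (0 : ℂ) < Fintype.card G := by exact_mod_cast Fintype.card_pos
  refine le_of_mul_le_mul_left ?_ hq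
  rw [mul_zero, card_mul_ftrans_mul]
  exact Finset.sum_nonneg fun δ _ => mul_nonneg (h₁ δ) (h₂ (γ - δ))

lemma PosFT.sum_nonneg {f : G → ℝ} (hf : PosFT f) : 0 ≤ ∑ x, f x := by
  have h := hf 0
  rw [ftrans_zero] at h
  exact_mod_cast h

lemma PosFT.sum_le_card_mul_apply_zero {f : G → ℝ} (hf : PosFT f) :
    ∑ x, f x ≤ Fintype.card G * f 0 := by
  have h := Finset.single_le_sum (fun γ _ => hf γ) (Finset.mem_univ (0 : AddChar G Circle))
  rw [sum_ftrans, ftrans_zero] at h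
  exact_mod_cast h

lemma PosFT.apply_zero_nonneg {f : G → ℝ} (hf : PosFT f) : 0 ≤ f 0 :=
  nonneg_of_mul_nonneg_right (hf.sum_nonneg.trans hf.sum_le_card_mul_apply_zero)
    (by exact_mod_cast Fintype.card_pos)

lemma PosFT.sum_mul_sum_le {f₁ f₂ : G → ℝ} (h₁ : PosFT f₁) (h₂ : PosFT f₂) :
    (∑ x, f₁ x) * ∑ x, f₂ x ≤ Fintype.card G * ∑ x, (f₁ * f₂) x := by
  have h := Finset.single_le_sum (fun δ _ => mul_nonneg (h₁ δ) (h₂ (0 - δ)))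
    (Finset.mem_univ (0 : AddChar G Circle))
  rw [← card_mul_ftrans_mul, sub_zero, ftrans_zero, ftrans_zero, ftrans_zero] at h
  exact_mod_cast h

end FourierPositivity

lemma le_mul_sInf_of_forall_le {a b : ℝ} {s : Set ℝ} (ha : 0 ≤ a) (hs : s.Nonempty)
    (h : ∀ r ∈ s, b ≤ a * r) : b ≤ a * sInf s := by
  rw [← smul_eq_mul, ← Real.sInf_smul_of_nonneg ha]
  exact le_csInf hs.smul_set fun _ ⟨r, hr, hr'⟩ => hr' ▸ h r hr

lemma sInf_le_mul_sInf_mul_sInf {T T₁ T₂ : Set ℝ} {c : ℝ} (hc : 0 ≤ c) (hT : BddBelow T)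
    (hT₁ : T₁.Nonempty) (hT₂ : T₂.Nonempty) (hT₁_nonneg : ∀ r ∈ T₁, 0 ≤ r)
    (hT₂_nonneg : ∀ r ∈ T₂, 0 ≤ r) (h : ∀ r₁ ∈ T₁, ∀ r₂ ∈ T₂, ∃ r ∈ T, r ≤ c * r₁ * r₂) :
    sInf T ≤ c * sInf T₁ * sInf T₂ := by
  refine le_mul_sInf_of_forall_le (mul_nonneg hc (Real.sInf_nonneg hT₁_nonneg)) hT₂
    fun r₂ hr₂ => ?_
  calc sInf T ≤ c * r₂ * sInf T₁ :=
        le_mul_sInf_of_forall_le (mul_nonneg hc (hT₂_nonneg r₂ hr₂)) hT₁ fun r₁ hr₁ => by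
          obtain ⟨r, hr, hle⟩ := h r₁ hr₁ r₂ hr₂
          exact (csInf_le hT hr).trans (hle.trans_eq (by ring))
    _ = c * sInf T₁ * r₂ := by ring

section LambdaBounds

variable {G : Type*} [AddCommGroup G] [Fintype G]

lemma lamSet_setOf_ne_zero_and (P : (G → ℝ) → Prop) :
    lamSet {f | f ≠ 0 ∧ P f} = lamSet {f | P f} := by
  ext r
  constructor
  · rintro ⟨f, hf, rest⟩
    exact ⟨f, hf.2, rest⟩
  · rintro ⟨f, hf, hpos, hsum, rfl⟩
    refine ⟨f, ⟨?_, hf⟩, hpos, hsum, rfl⟩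
    rintro rfl
    simp at hsum

lemma nonneg_of_mem_lamSet {S : Set (G → ℝ)} {r : ℝ} (hr : r ∈ lamSet S) : 0 ≤ r := by
  obtain ⟨f, -, hf, -, rfl⟩ := hr
  exact div_nonneg hf.apply_zero_nonneg hf.sum_nonneg

lemma one_mem_lamSet [DecidableEq G] {S : Set (G → ℝ)} (h : Pi.single 0 1 ∈ S) :
    (1 : ℝ) ∈ lamSet S := by
  have hsum : ∑ x, (Pi.single 0 1 : G → ℝ) x = 1 := by simp
  refine ⟨_, h, fun γ => ?_, by simp [hsum], by simp [hsum]⟩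
  rw [ftrans, Fintype.sum_eq_single 0 fun x hx => by simp [hx]]
  simp

lemma exists_mem_lamSet_le_card_mul {S S₁ S₂ : Set (G → ℝ)}
    (hS : ∀ f₁ ∈ S₁, ∀ f₂ ∈ S₂, f₁ * f₂ ∈ S) {r₁ r₂ : ℝ} (hr₁ : r₁ ∈ lamSet S₁)
    (hr₂ : r₂ ∈ lamSet S₂) : ∃ r ∈ lamSet S, r ≤ Fintype.card G * r₁ * r₂ := by
  obtain ⟨f₁, hf₁, hpos₁, hsum₁, rfl⟩ := hr₁
  obtain ⟨f₂, hf₂, hpos₂, hsum₂, rfl⟩ := hr₂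
  have hq : (0 : ℝ) < Fintype.card G := by exact_mod_cast Fintype.card_pos
  have hprod : 0 < (∑ x, f₁ x) * ∑ x, f₂ x :=
    mul_pos (hpos₁.sum_nonneg.lt_of_ne' hsum₁) (hpos₂.sum_nonneg.lt_of_ne' hsum₂)
  have hsum_le := hpos₁.sum_mul_sum_le hpos₂
  have hsum : 0 < ∑ x, (f₁ * f₂) x := pos_of_mul_pos_right (hprod.trans_le hsum_le) hq.le
  refine ⟨_, ⟨f₁ * f₂, hS f₁ hf₁ f₂ hf₂, hpos₁.mul hpos₂, hsum.ne', rfl⟩, ?_⟩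
  calc (f₁ * f₂) 0 / ∑ x, (f₁ * f₂) x
      ≤ f₁ 0 * f₂ 0 / ((∑ x, f₁ x) * (∑ x, f₂ x) / Fintype.card G) :=
        div_le_div_of_nonneg_left (mul_nonneg hpos₁.apply_zero_nonneg hpos₂.apply_zero_nonneg)
          (div_pos hprod hq) ((div_le_iff₀' hq).2 hsum_le)
    _ = Fintype.card G * (f₁ 0 / ∑ x, f₁ x) * (f₂ 0 / ∑ x, f₂ x) := by
        field_simp

lemma sInf_lamSet_le_card_mul [DecidableEq G] {S S₁ S₂ : Set (G → ℝ)}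
    (h₁ : Pi.single 0 1 ∈ S₁) (h₂ : Pi.single 0 1 ∈ S₂)
    (hS : ∀ f₁ ∈ S₁, ∀ f₂ ∈ S₂, f₁ * f₂ ∈ S) :
    sInf (lamSet S) ≤ Fintype.card G * sInf (lamSet S₁) * sInf (lamSet S₂) :=
  sInf_le_mul_sInf_mul_sInf (Nat.cast_nonneg _) ⟨0, fun _ => nonneg_of_mem_lamSet⟩
    ⟨1, one_mem_lamSet h₁⟩ ⟨1, one_mem_lamSet h₂⟩ (fun _ => nonneg_of_mem_lamSet)
    (fun _ => nonneg_of_mem_lamSet) fun _ hr₁ _ hr₂ => exists_mem_lamSet_le_card_mul hS hr₁ hr₂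

end LambdaBounds

section Support

variable {G : Type*} {A₁ A₂ : Set G} {f₁ f₂ : G → ℝ}

lemma mul_eq_zero_of_notMem_inter (h₁ : ∀ x ∉ A₁, f₁ x = 0) (h₂ : ∀ x ∉ A₂, f₂ x = 0) :
    ∀ x ∉ A₁ ∩ A₂, (f₁ * f₂) x = 0 := by
  intro x hx
  by_cases hx₁ : x ∈ A₁
  · simp [h₂ x fun hx₂ => hx ⟨hx₁, hx₂⟩]
  · simp [h₁ x hx₁]

lemma mul_nonpos_of_notMem_inter (h₁ : ∀ x ∉ A₁, f₁ x ≤ 0) (h₂ : ∀ x ∉ A₂, f₂ x = 0)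
    (h₂_nonneg : ∀ x ∈ A₂, 0 ≤ f₂ x) : ∀ x ∉ A₁ ∩ A₂, (f₁ * f₂) x ≤ 0 := by
  intro x hx
  by_cases hx₂ : x ∈ A₂
  · have hx₁ : x ∉ A₁ := fun hx₁ => hx ⟨hx₁, hx₂⟩
    exact mul_nonpos_of_nonpos_of_nonneg (h₁ x hx₁) (h₂_nonneg x hx₂)
  · simp [h₂ x hx₂]

lemma mul_nonneg_of_mem_inter (h₁ : ∀ x ∈ A₁, 0 ≤ f₁ x) (h₂ : ∀ x ∈ A₂, 0 ≤ f₂ x) :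
    ∀ x ∈ A₁ ∩ A₂, 0 ≤ (f₁ * f₂) x :=
  fun x hx => mul_nonneg (h₁ x hx.1) (h₂ x hx.2)

end Support

theorem stmt12 {G : Type*} [AddCommGroup G] [Fintype G]
    (A₁ A₂ : Set G) (h₁ : IsStandard A₁) (h₂ : IsStandard A₂) :
    lam (A₁ ∩ A₂) ≤ (Fintype.card G : ℝ) * lam A₁ * lam A₂ ∧
    lamPlus (A₁ ∩ A₂) ≤ (Fintype.card G : ℝ) * lamPlus A₁ * lamPlus A₂ ∧
    lamMinus (A₁ ∩ A₂) ≤ (Fintype.card G : ℝ) * lamMinus A₁ * lamPlus A₂ ∧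
    lamPM (A₁ ∩ A₂) ≤ (Fintype.card G : ℝ) * lamPM A₁ * lamPlus A₂ := by
  classical
  obtain ⟨-, h0₁⟩ := h₁
  obtain ⟨-, h0₂⟩ := h₂
  have hδ : ∀ {A : Set G}, (0 : G) ∈ A → ∀ x ∉ A, (Pi.single 0 1 : G → ℝ) x = 0 :=
    fun h0 x hx => Pi.single_eq_of_ne (ne_of_mem_of_not_mem h0 hx).symm 1
  have hδ_nonneg : ∀ {A : Set G}, ∀ x ∈ A, 0 ≤ (Pi.single 0 1 : G → ℝ) x := fun x _ => by
    by_cases hx : x = 0 <;> simp [hx]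
  simp only [lam, lamPlus, lamMinus, lamPM, lamSet_setOf_ne_zero_and]
  refine ⟨?_, ?_, ?_, ?_⟩
  · exact sInf_lamSet_le_card_mul (hδ h0₁) (hδ h0₂) fun _ hf₁ _ hf₂ =>
      mul_eq_zero_of_notMem_inter hf₁ hf₂
  · exact sInf_lamSet_le_card_mul ⟨hδ h0₁, hδ_nonneg⟩ ⟨hδ h0₂, hδ_nonneg⟩ fun _ hf₁ _ hf₂ =>
      ⟨mul_eq_zero_of_notMem_inter hf₁.1 hf₂.1, mul_nonneg_of_mem_inter hf₁.2 hf₂.2⟩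
  · exact sInf_lamSet_le_card_mul (fun x hx => (hδ h0₁ x hx).le) ⟨hδ h0₂, hδ_nonneg⟩
      fun _ hf₁ _ hf₂ => mul_nonpos_of_notMem_inter hf₁ hf₂.1 hf₂.2
  · exact sInf_lamSet_le_card_mul ⟨fun x hx => (hδ h0₁ x hx).le, hδ_nonneg⟩
      ⟨hδ h0₂, hδ_nonneg⟩ fun _ hf₁ _ hf₂ =>
      ⟨mul_nonpos_of_notMem_inter hf₁.1 hf₂.1 hf₂.2, mul_nonneg_of_mem_inter hf₁.2 hf₂.2⟩
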